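/- Let A → B be a small extension of artinian local rings (a surjection whose kernel is a nonzero principal ideal (t) killed by the maximal ideal of A), let ρ : G → GL_n(A) be a representation whose reduction ρ̄ : G → GL_n(k) to the residue field k is absolutely irreducible. If the centralizer of the image of the reduction of ρ to B is B·1, then the centralizer in M_n(A) of the image of ρ equals A·1. -/
import Mathlib


/-- Inductive step of Mazur's centralizer lemma along a small extension: let
`φ : A → B` be a small extension of artinian local rings (surjective, with kernel a nonzero
principal ideal `(t)` killed by the maximal ideal of `A`), and `ρ : G → GL_n(A)` a
representation whose reduction `ρ̄` to the residue field `k` of `A` is absolutely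
irreducible.  If the centralizer of the image of the reduction of `ρ` to `B` consists of
the scalars `B·1`, then the centralizer in `M_n(A)` of the image of `ρ` is `A·1`. -/
theorem centralizer_eq_scalars_of_smallExtension
    (A B : Type*) [CommRing A] [CommRing B]
    [IsArtinianRing A] [IsArtinianRing B] [IsLocalRing A] [IsLocalRing B]
    (φ : A →+* B) (hsurj : Function.Surjective φ) [IsLocalHom φ]
    (t : A) (ht0 : t ≠ 0) (hker : RingHom.ker φ = Ideal.span {t})
    (hsmall : ∀ a ∈ IsLocalRing.maximalIdeal A, a * t = 0)
    (G : Type*) [Group G] (n : ℕ) (ρ : G →* GL (Fin n) A)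
    (habs : ∀ (K : Type) [Field K] (f : IsLocalRing.ResidueField A →+* K)
        (W : Submodule K (Fin n → K)),
      (∀ g : G, ∀ x ∈ W,
          Matrix.mulVec
            (((IsLocalRing.residue A).mapMatrix (ρ g : Matrix (Fin n) (Fin n) A)).map f) x ∈ W) →
        W = ⊥ ∨ W = ⊤)
    (hB : ∀ Y : Matrix (Fin n) (Fin n) B,
      (∀ g : G, Y * φ.mapMatrix (ρ g : Matrix (Fin n) (Fin n) A) =
          φ.mapMatrix (ρ g : Matrix (Fin n) (Fin n) A) * Y) →
        ∃ c : B, Y = c • (1 : Matrix (Fin n) (Fin n) B)) :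
    ∀ X : Matrix (Fin n) (Fin n) A,
      (∀ g : G, X * (ρ g : Matrix (Fin n) (Fin n) A) = (ρ g : Matrix (Fin n) (Fin n) A) * X) →
        ∃ c : A, X = c • (1 : Matrix (Fin n) (Fin n) A) := by
  classical
  intro X hX
  -- trivial case `n = 0`
  by_cases hn : n = 0
  · refine ⟨0, ?_⟩
    subst hn
    ext i j
    exact i.elim0
  have i0 : Fin n := ⟨0, Nat.pos_of_ne_zero hn⟩
  -- notation
  set mA := IsLocalRing.maximalIdeal A with hmA
  set mB := IsLocalRing.maximalIdeal B with hmB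
  -- basic facts about `t`
  have htm : t ∈ mA := by
    by_contra h
    have hu : IsUnit t := IsLocalRing.notMem_maximalIdeal.mp h
    have : φ t = 0 := by
      rw [← RingHom.mem_ker, hker]
      exact Ideal.mem_span_singleton_self t
    have : IsUnit (φ t) := hu.map φ
    rw [‹φ t = 0›] at this
    exact IsLocalRing.notMem_maximalIdeal.mpr this (Ideal.zero_mem mB)
  have hann : ∀ x : A, t * x = 0 → x ∈ mA := by
    intro x hx
    by_contra h
    have hu : IsUnit x := IsLocalRing.notMem_maximalIdeal.mp h
    obtain ⟨u, rfl⟩ := hu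
    apply ht0
    have := congrArg (· * (↑u⁻¹ : A)) hx
    simpa [mul_assoc] using this
  have hannB : ∀ x : A, φ x ∈ mB → x ∈ mA := by
    intro x hx
    by_contra h
    exact IsLocalRing.notMem_maximalIdeal.mpr
      ((IsLocalRing.notMem_maximalIdeal.mp h).map φ) hx
  -- step 1: reduce mod `ker φ`
  have hcomm : ∀ g : G, φ.mapMatrix X * φ.mapMatrix (ρ g : Matrix (Fin n) (Fin n) A) =
      φ.mapMatrix (ρ g : Matrix (Fin n) (Fin n) A) * φ.mapMatrix X := by
    intro g
    rw [← map_mul, ← map_mul, hX]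
  obtain ⟨c, hc⟩ := hB (φ.mapMatrix X) hcomm
  obtain ⟨a, rfl⟩ := hsurj c
  have hdvd : ∀ i j, t ∣ (X - a • 1) i j := by
    intro i j
    rw [← Ideal.mem_span_singleton, ← hker, RingHom.mem_ker]
    have h1 : φ ((X - a • 1) i j) = (φ.mapMatrix (X - a • 1)) i j := rfl
    rw [h1, map_sub, hc]
    simp [RingHom.mapMatrix_apply, Matrix.map_apply, Matrix.smul_apply, Matrix.one_apply,
      apply_ite φ]
  choose Y hY using hdvd
  -- step 2: `t • [Y, ρ g] = 0`, hence `[Y, ρ g]` has entries in `mA`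
  have hYc : ∀ (g : G) i j,
      (Matrix.of Y * (ρ g : Matrix (Fin n) (Fin n) A)
        - (ρ g : Matrix (Fin n) (Fin n) A) * Matrix.of Y) i j ∈ mA := by
    intro g i j
    apply hann
    have h1 : t • (Matrix.of Y * (ρ g : Matrix (Fin n) (Fin n) A)
        - (ρ g : Matrix (Fin n) (Fin n) A) * Matrix.of Y)
        = (X - a • 1) * (ρ g : Matrix (Fin n) (Fin n) A)
          - (ρ g : Matrix (Fin n) (Fin n) A) * (X - a • 1) := by
      have hXY : X - a • 1 = t • Matrix.of Y := by
        ext i j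
        simpa [Matrix.smul_apply] using hY i j
      rw [hXY, smul_sub, Matrix.smul_mul, Matrix.mul_smul]
    have h2 : (X - a • 1) * (ρ g : Matrix (Fin n) (Fin n) A)
        - (ρ g : Matrix (Fin n) (Fin n) A) * (X - a • 1) = 0 := by
      rw [Matrix.sub_mul, Matrix.mul_sub, hX, Matrix.smul_mul, Matrix.mul_smul,
        Matrix.one_mul, Matrix.mul_one]
      abel
    have := congrFun (congrFun (h1.trans h2) i) j
    simpa [Matrix.smul_apply] using this
  -- step 3: use `hB` to show `φ(Y)` is scalar mod `mB`
  set Z := φ.mapMatrix (Matrix.of Y) with hZ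
  have hZc : ∀ (g : G) i j,
      (Z * φ.mapMatrix (ρ g : Matrix (Fin n) (Fin n) A)
        - φ.mapMatrix (ρ g : Matrix (Fin n) (Fin n) A) * Z) i j ∈ mB := by
    intro g i j
    have h1 : Z * φ.mapMatrix (ρ g : Matrix (Fin n) (Fin n) A)
        - φ.mapMatrix (ρ g : Matrix (Fin n) (Fin n) A) * Z
        = φ.mapMatrix (Matrix.of Y * (ρ g : Matrix (Fin n) (Fin n) A)
            - (ρ g : Matrix (Fin n) (Fin n) A) * Matrix.of Y) := by
      rw [map_sub, map_mul, map_mul]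
    rw [h1]
    exact map_nonunit φ _ (hYc g i j)
  -- find `a' : A` such that `Y - a' • 1` has entries in `mA`
  have key : ∃ a' : A, ∀ i j, (Matrix.of Y - a' • 1) i j ∈ mA := by
    by_cases hbot : mB = ⊥
    · -- `B` is a field: `Z` commutes exactly
      have hZc' : ∀ g : G, Z * φ.mapMatrix (ρ g : Matrix (Fin n) (Fin n) A) =
          φ.mapMatrix (ρ g : Matrix (Fin n) (Fin n) A) * Z := by
        intro g
        have h := hZc g
        rw [hbot] at h
        have : Z * φ.mapMatrix (ρ g : Matrix (Fin n) (Fin n) A)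
            - φ.mapMatrix (ρ g : Matrix (Fin n) (Fin n) A) * Z = 0 := by
          ext i j
          simpa using h i j
        linear_combination (norm := noncomm_ring) this
      obtain ⟨c', hc'⟩ := hB Z hZc'
      obtain ⟨a', rfl⟩ := hsurj c'
      refine ⟨a', fun i j => ?_⟩
      apply hannB
      have h1 : φ ((Matrix.of Y - a' • 1) i j) = (φ.mapMatrix (Matrix.of Y - a' • 1)) i j := rfl
      rw [h1, map_sub, ← hZ, hc']
      have : φ.mapMatrix ((a' : A) • (1 : Matrix (Fin n) (Fin n) A))
          = φ a' • (1 : Matrix (Fin n) (Fin n) B) := by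
        ext i j
        simp [RingHom.mapMatrix_apply, Matrix.map_apply, Matrix.smul_apply, Matrix.one_apply,
          apply_ite φ]
      rw [this, sub_self]
      exact Ideal.zero_mem mB
    · -- `B` is not a field: take a socle element `s` of `B`
      obtain ⟨m, hm⟩ := IsLocalRing.jacobson_eq_maximalIdeal (⊥ : Ideal B) bot_ne_top ▸
        (IsArtinianRing.isNilpotent_jacobson_bot (R := B) : ∃ m, _)
      -- `m` : exponent with `mB ^ m = ⊥`
      have hex : ∃ m, mB ^ m = ⊥ := ⟨m, hm⟩
      set j := Nat.find hex with hj
      have hjspec : mB ^ j = ⊥ := Nat.find_spec hex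
      have hj2 : 2 ≤ j := by
        rcases Nat.lt_or_ge j 2 with h | h
        · interval_cases j
          · exfalso
            rw [pow_zero, Ideal.one_eq_top] at hjspec
            exact bot_ne_top hjspec.symm
          · exfalso
            rw [pow_one] at hjspec
            exact hbot hjspec
        · exact h
      have hjm : mB ^ (j - 1) ≠ ⊥ := Nat.find_min hex (by omega)
      obtain ⟨s, hs_mem, hs0⟩ := Submodule.ne_bot_iff _ |>.mp hjm
      have hs : ∀ x ∈ mB, x * s = 0 := by
        intro x hx
        have h1 : x * s ∈ mB * mB ^ (j - 1) := Ideal.mul_mem_mul hx hs_mem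
        rw [← pow_succ', Nat.sub_add_cancel (by omega), hjspec] at h1
        exact h1
      have hannS : ∀ x : B, s * x = 0 → x ∈ mB := by
        intro x hx
        by_contra h
        obtain ⟨u, rfl⟩ := IsLocalRing.notMem_maximalIdeal.mp h
        apply hs0
        have := congrArg (· * (↑u⁻¹ : B)) hx
        simpa [mul_assoc] using this
      -- `s • Z` commutes exactly
      have hsZ : ∀ g : G, (s • Z) * φ.mapMatrix (ρ g : Matrix (Fin n) (Fin n) A) =
          φ.mapMatrix (ρ g : Matrix (Fin n) (Fin n) A) * (s • Z) := by
        intro g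
        have h1 : (s • Z) * φ.mapMatrix (ρ g : Matrix (Fin n) (Fin n) A)
            - φ.mapMatrix (ρ g : Matrix (Fin n) (Fin n) A) * (s • Z)
            = s • (Z * φ.mapMatrix (ρ g : Matrix (Fin n) (Fin n) A)
              - φ.mapMatrix (ρ g : Matrix (Fin n) (Fin n) A) * Z) := by
          rw [smul_sub, Matrix.smul_mul, Matrix.mul_smul]
        have h2 : s • (Z * φ.mapMatrix (ρ g : Matrix (Fin n) (Fin n) A)
            - φ.mapMatrix (ρ g : Matrix (Fin n) (Fin n) A) * Z) = 0 := by
          ext i j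
          have := hs _ (hZc g i j)
          rw [mul_comm] at this
          simpa [Matrix.smul_apply] using this
        have := h1.trans h2
        linear_combination (norm := noncomm_ring) this
      obtain ⟨c', hc'⟩ := hB (s • Z) hsZ
      obtain ⟨a', ha'⟩ := hsurj (Z i0 i0)
      refine ⟨a', fun i j => ?_⟩
      apply hannB
      have h1 : φ ((Matrix.of Y - a' • 1) i j) = Z i j - φ a' * (1 : Matrix (Fin n) (Fin n) B) i j := by
        simp [hZ, RingHom.mapMatrix_apply, Matrix.map_apply, Matrix.sub_apply,
          Matrix.smul_apply, Matrix.one_apply, apply_ite φ]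
      rw [h1, ha']
      apply hannS
      have hsZij : ∀ p q, s * Z p q = c' * (1 : Matrix (Fin n) (Fin n) B) p q := by
        intro p q
        have := congrFun (congrFun hc' p) q
        simpa [Matrix.smul_apply] using this
      by_cases hij : i = j
      · subst hij
        have e1 := hsZij i i
        have e2 := hsZij i0 i0
        simp only [Matrix.one_apply_eq] at e1 e2 ⊢
        linear_combination e1 - e2
      · have e1 := hsZij i j
        rw [mul_sub, e1]
        simp [Matrix.one_apply, hij]
  -- step 4: conclude
  obtain ⟨a', ha'⟩ := key
  refine ⟨a + t * a', ?_⟩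
  ext i j
  have h1 := hY i j
  have h2 : t * ((Matrix.of Y - a' • 1) i j) = 0 := by
    have := hsmall _ (ha' i j)
    rw [mul_comm] at this
    exact this
  have h3 : (Matrix.of Y - a' • 1) i j = Y i j - a' * (1 : Matrix (Fin n) (Fin n) A) i j := by
    simp [Matrix.sub_apply, Matrix.smul_apply]
  rw [h3] at h2
  have h4 : X i j = (a + t * a') * (1 : Matrix (Fin n) (Fin n) A) i j := by
    have h5 : (X - a • 1) i j = X i j - a * (1 : Matrix (Fin n) (Fin n) A) i j := by
      simp [Matrix.sub_apply, Matrix.smul_apply]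
    rw [h5] at h1
    linear_combination h1 + h2
  simpa [Matrix.smul_apply] using h4
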